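/- arXiv:0809.2713 — 3 statements merged into one kernel-verified Lean document; each statement's English description precedes it below -/
import Mathlib

section
/- Let O = ℤ[λ] be an order in the number field K, let A and B be nonzero ideals of O, and let 𝔄 = O_{(M)}·A, 𝔅 = O_{(M)}·B be their extensions to the localization at powers of λ. If there exists ξ ∈ K^× with ξ𝔄 = 𝔅, then there exist x ∈ (A : B) and y ∈ (B : A) with xy = λ^k for some nonnegative integer k. -/
noncomputable section

/-- `ℤ[λ]`, the subring of `K` generated by `λ`. -/
def orderGen {K : Type} [Field K] (lam : K) : Subring K := Subring.closure {lam}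

theorem lam_mem_orderGen {K : Type} [Field K] (lam : K) : lam ∈ orderGen lam :=
  Subring.subset_closure (Set.mem_singleton lam)

/-- The localization of `ℤ[λ]` at the multiplicative set `M = {1, λ, λ², …}`,
viewed inside `K`. -/
def locSubring {K : Type} [Field K] (lam : K) (hlam : lam ≠ 0) : Subring K where
  carrier := {x : K | ∃ a ∈ orderGen lam, ∃ k : ℕ, x = a / lam ^ k}
  one_mem' := ⟨1, one_mem _, 0, by simp⟩
  zero_mem' := ⟨0, zero_mem _, 0, by simp⟩
  neg_mem' := by
    rintro x ⟨a, ha, k, rfl⟩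
    exact ⟨-a, neg_mem ha, k, by ring⟩
  mul_mem' := by
    rintro x y ⟨a, ha, k, rfl⟩ ⟨b, hb, m, rfl⟩
    exact ⟨a * b, mul_mem ha hb, k + m, by rw [pow_add, div_mul_div_comm]⟩
  add_mem' := by
    rintro x y ⟨a, ha, k, rfl⟩ ⟨b, hb, m, rfl⟩
    refine ⟨a * lam ^ m + b * lam ^ k, ?_, k + m, ?_⟩
    · exact add_mem (mul_mem ha (pow_mem (lam_mem_orderGen lam) m))
        (mul_mem hb (pow_mem (lam_mem_orderGen lam) k))
    · rw [pow_add, div_add_div _ _ (pow_ne_zero k hlam) (pow_ne_zero m hlam)]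
      ring_nf

theorem orderGen_le_locSubring {K : Type} [Field K] (lam : K) (hlam : lam ≠ 0) :
    orderGen lam ≤ locSubring lam hlam := fun x hx => ⟨x, hx, 0, by simp⟩

/-- The underlying subset of `K` of an ideal of a subring of `K`. -/
def idealSet {K : Type} [Field K] (R : Subring K) (I : Ideal R) : Set K :=
  Subtype.val '' (I : Set R)

/-- The fractional ideal `(A : B) = {ξ ∈ K ∣ ξB ⊆ A}` as a subset of `K`. -/
def colonSet {K : Type} [Field K] (R : Subring K) (A B : Ideal R) : Set K :=
  {x : K | ∀ b : R, b ∈ B → ∃ a : R, a ∈ A ∧ (a : K) = x * (b : K)}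


/-- Elements of the extension of `A` to the localization have the form `a / λ^k`. -/
theorem mem_extension {K : Type} [Field K] (lam : K) (hlam : lam ≠ 0)
    (A : Ideal (orderGen lam)) (z : K)
    (hz : z ∈ idealSet (locSubring lam hlam)
      (Ideal.map (Subring.inclusion (orderGen_le_locSubring lam hlam)) A)) :
    ∃ a : orderGen lam, a ∈ A ∧ ∃ k : ℕ, z = (a : K) / lam ^ k := by
  obtain ⟨w, hw, rfl⟩ := hz
  rw [Ideal.map] at hw
  refine Submodule.span_induction
    (p := fun (w : locSubring lam hlam) _ =>
      ∃ a : orderGen lam, a ∈ A ∧ ∃ k : ℕ, (w : K) = (a : K) / lam ^ k)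
    ?_ ?_ ?_ ?_ hw
  · rintro x ⟨a, ha, rfl⟩
    exact ⟨a, ha, 0, by simp [Subring.inclusion]⟩
  · exact ⟨0, zero_mem _, 0, by simp⟩
  · rintro x y hx hy ⟨a, ha, k, hak⟩ ⟨b, hb, m, hbm⟩
    refine ⟨⟨lam, lam_mem_orderGen lam⟩ ^ m * a + ⟨lam, lam_mem_orderGen lam⟩ ^ k * b,
      add_mem (Ideal.mul_mem_left _ _ ha) (Ideal.mul_mem_left _ _ hb), k + m, ?_⟩
    push_cast
    rw [hak, hbm, pow_add,
      div_add_div _ _ (pow_ne_zero k hlam) (pow_ne_zero m hlam)]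
    ring
  · rintro r x hx ⟨a, ha, k, hak⟩
    obtain ⟨s, hs, j, hsj⟩ := r.2
    refine ⟨⟨s, hs⟩ * a, Ideal.mul_mem_left _ _ ha, j + k, ?_⟩
    have : ((r • x : locSubring lam hlam) : K) = (r : K) * (x : K) := rfl
    rw [this, hak, hsj]
    push_cast
    rw [pow_add, div_mul_div_comm]

/-- Uniformize the exponent using Noetherianity. -/
theorem uniform_colon {K : Type} [Field K] (lam : K) (hlam : lam ≠ 0)
    (A B : Ideal (orderGen lam)) (x : K)
    (h : ∀ b : orderGen lam, b ∈ B → ∃ k : ℕ, ∃ a : orderGen lam, a ∈ A ∧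
      (a : K) = x * lam ^ k * (b : K)) :
    ∃ m : ℕ, x * lam ^ m ∈ colonSet (orderGen lam) A B := by
  haveI : IsNoetherianRing (orderGen lam) := by
    have := is_noetherian_subring_closure ({lam} : Set K) (Set.finite_singleton lam)
    exact this
  obtain ⟨S, hS⟩ := IsNoetherian.noetherian B
  -- first get a uniform exponent for the generators
  have key : ∀ T : Finset (orderGen lam), (∀ b ∈ T, b ∈ B) →
      ∃ m : ℕ, ∀ b ∈ T, ∃ a : orderGen lam, a ∈ A ∧
      (a : K) = x * lam ^ m * (b : K) := by
    classical
    intro T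
    induction T using Finset.induction with
    | empty => exact fun _ => ⟨0, fun b hb => absurd hb (Finset.notMem_empty b)⟩
    | @insert b S' hbS ih =>
      intro hT
      obtain ⟨m, hm⟩ := ih (fun c hc => hT c (Finset.mem_insert_of_mem hc))
      obtain ⟨k, a, ha, hak⟩ := h b (hT b (Finset.mem_insert_self b S'))
      refine ⟨max m k, fun c hc => ?_⟩
      rcases Finset.mem_insert.mp hc with rfl | hc
      · refine ⟨⟨lam, lam_mem_orderGen lam⟩ ^ (max m k - k) * a,
          Ideal.mul_mem_left _ _ ha, ?_⟩
        have hmax : lam ^ (max m k) = lam ^ (max m k - k) * lam ^ k := by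
          rw [← pow_add]; congr 1; omega
        push_cast
        rw [hak, hmax]; ring
      · obtain ⟨a', ha', hak'⟩ := hm c hc
        refine ⟨⟨lam, lam_mem_orderGen lam⟩ ^ (max m k - m) * a',
          Ideal.mul_mem_left _ _ ha', ?_⟩
        have hmax : lam ^ (max m k) = lam ^ (max m k - m) * lam ^ m := by
          rw [← pow_add]; congr 1; omega
        push_cast
        rw [hak', hmax]; ring
  obtain ⟨m, hm⟩ := key S (fun c hc => by rw [← hS]; exact Ideal.subset_span hc)
  refine ⟨m, fun b hb => ?_⟩
  rw [← hS] at hb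
  refine Submodule.span_induction
    (p := fun (b : orderGen lam) _ => ∃ a : orderGen lam, a ∈ A ∧
      (a : K) = x * lam ^ m * (b : K)) ?_ ?_ ?_ ?_ hb
  · exact fun c hc => hm c hc
  · exact ⟨0, zero_mem _, by simp⟩
  · rintro c d _ _ ⟨a, ha, hak⟩ ⟨a', ha', hak'⟩
    exact ⟨a + a', add_mem ha ha', by push_cast; rw [hak, hak']; ring⟩
  · rintro r c _ ⟨a, ha, hak⟩
    refine ⟨r * a, Ideal.mul_mem_left _ _ ha, ?_⟩
    have : ((r • c : orderGen lam) : K) = (r : K) * (c : K) := rfl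
    push_cast
    rw [this, hak]
    ring


/-- Theorem 1 (i), 'only if' direction: if the extensions `𝔄 = O_{(M)}·A` and
`𝔅 = O_{(M)}·B` of nonzero ideals `A`, `B` of `O = ℤ[λ]` are equivalent via some
`ξ ∈ K^×`, then there exist `x ∈ (A : B)` and `y ∈ (B : A)` with `x y = λ^k` for some
nonnegative integer `k`. -/
theorem colon_elements_of_extended_ideals_equivalent {K : Type} [Field K] [NumberField K]
    (lam : K) (hlam : lam ≠ 0) (hint : IsIntegral ℤ lam)
    (hgen : Algebra.adjoin ℚ ({lam} : Set K) = ⊤)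
    (A B : Ideal (orderGen lam)) (hA : A ≠ ⊥) (hB : B ≠ ⊥)
    (ξ : K) (hξ : ξ ≠ 0)
    (heq : (fun t => ξ * t) '' idealSet (locSubring lam hlam)
          (Ideal.map (Subring.inclusion (orderGen_le_locSubring lam hlam)) A) =
        idealSet (locSubring lam hlam)
          (Ideal.map (Subring.inclusion (orderGen_le_locSubring lam hlam)) B)) :
    ∃ x ∈ colonSet (orderGen lam) A B, ∃ y ∈ colonSet (orderGen lam) B A,
      ∃ k : ℕ, x * y = lam ^ k := by
  -- membership of elements in the extensions
  have hmemA : ∀ a : orderGen lam, a ∈ A → (a : K) ∈ idealSet (locSubring lam hlam)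
      (Ideal.map (Subring.inclusion (orderGen_le_locSubring lam hlam)) A) := by
    intro a ha
    exact ⟨Subring.inclusion (orderGen_le_locSubring lam hlam) a,
      Ideal.mem_map_of_mem _ ha, rfl⟩
  have hmemB : ∀ b : orderGen lam, b ∈ B → (b : K) ∈ idealSet (locSubring lam hlam)
      (Ideal.map (Subring.inclusion (orderGen_le_locSubring lam hlam)) B) := by
    intro b hb
    exact ⟨Subring.inclusion (orderGen_le_locSubring lam hlam) b,
      Ideal.mem_map_of_mem _ hb, rfl⟩
  -- direction 1 : ξ⁻¹ λ^k b ∈ A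
  have h1 : ∀ b : orderGen lam, b ∈ B → ∃ k : ℕ, ∃ a : orderGen lam, a ∈ A ∧
      (a : K) = ξ⁻¹ * lam ^ k * (b : K) := by
    intro b hb
    have : (b : K) ∈ (fun t => ξ * t) '' idealSet (locSubring lam hlam)
        (Ideal.map (Subring.inclusion (orderGen_le_locSubring lam hlam)) A) := by
      rw [heq]; exact hmemB b hb
    obtain ⟨z, hz, hzb⟩ := this
    obtain ⟨a, ha, k, hak⟩ := mem_extension lam hlam A z hz
    refine ⟨k, a, ha, ?_⟩
    rw [hak] at hzb
    field_simp at hzb ⊢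
    linear_combination hzb
  -- direction 2 : ξ λ^k a ∈ B
  have h2 : ∀ a : orderGen lam, a ∈ A → ∃ k : ℕ, ∃ b : orderGen lam, b ∈ B ∧
      (b : K) = ξ * lam ^ k * (a : K) := by
    intro a ha
    have : ξ * (a : K) ∈ idealSet (locSubring lam hlam)
        (Ideal.map (Subring.inclusion (orderGen_le_locSubring lam hlam)) B) := by
      rw [← heq]; exact ⟨(a : K), hmemA a ha, rfl⟩
    obtain ⟨b, hb, k, hbk⟩ := mem_extension lam hlam B _ this
    refine ⟨k, b, hb, ?_⟩
    field_simp at hbk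
    linear_combination (-1 : K) * hbk
  obtain ⟨m, hx⟩ := uniform_colon lam hlam A B ξ⁻¹ h1
  obtain ⟨n, hy⟩ := uniform_colon lam hlam B A ξ h2
  exact ⟨ξ⁻¹ * lam ^ m, hx, ξ * lam ^ n, hy, m + n, by field_simp; ring⟩

end
end

section
/- Let O = ℤ[λ] be an order in the number field K with ring of integers O_K, let A, B be nonzero ideals of O with extensions 𝔄 = O_{(M)}·A and 𝔅 = O_{(M)}·B to the localization at powers of λ. If 𝔄 and 𝔅 are equivalent (ξ𝔄 = 𝔅 for some ξ ∈ K^×), then in the class group Cl(O_K) one has [O_K·A] ≡ [O_K·B] modulo the subgroup generated by the classes of the prime ideals Q_j of O_K dividing O_K·λ. -/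
/-!
Write `ξ = u / v` with `u, v ∈ O_K`. The equality `ξ𝔄 = 𝔅` says that every element of `u·A`
lands in `v·B` after multiplication by some power of `λ`, and vice versa. As `O_K` is
Noetherian one power works for all elements at once, so `λ^N u·O_K A ⊆ v·O_K B` and
`λ^M v·O_K B ⊆ u·O_K A`. In the Dedekind domain `O_K` the first inclusion is a factorisation
`λ^N u·O_K A = v·O_K B·C`, and multiplying the two shows `C ∣ λ^(N+M)`. Hence
`[O_K A] = [O_K B][C]`, with `C` a product of primes containing `λ`.
-/

noncomputable section

open nonZeroDivisors

namespace Ideal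

theorem exists_pow_forall_mul_pow_mem {R : Type*} [CommRing R] [IsNoetherianRing R]
    (x : R) (J : Ideal R) : ∃ N : ℕ, ∀ (y : R) (k : ℕ), y * x ^ k ∈ J → y * x ^ N ∈ J := by
  have hmono : Monotone fun k : ℕ => J.colon {x ^ k} := fun k l hkl y hy => by
    rw [Submodule.mem_colon_singleton, smul_eq_mul] at hy ⊢
    obtain ⟨c, hc⟩ := pow_dvd_pow x hkl
    rw [hc, ← mul_assoc]
    exact J.mul_mem_right c hy
  obtain ⟨N, hN⟩ := monotone_stabilizes_iff_noetherian.mpr inferInstance ⟨_, hmono⟩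
  refine ⟨N, fun y k hy => ?_⟩
  have hy' : y ∈ J.colon {x ^ max N k} :=
    hmono (le_max_right N k) (Submodule.mem_colon_singleton.mpr hy)
  rw [show J.colon {x ^ max N k} = J.colon {x ^ N} from (hN _ (le_max_left N k)).symm] at hy'
  exact Submodule.mem_colon_singleton.mp hy'

theorem exists_eq_mul_dvd_span_pow_of_le {R : Type*} [CommRing R] [IsDedekindDomain R]
    {x u v : R} (hx : x ≠ 0) (hu : u ≠ 0) (hv : v ≠ 0) {I J : Ideal R} (hI : I ≠ 0) (hJ : J ≠ 0)
    {N M : ℕ} (hIJ : span {x ^ N * u} * I ≤ span {v} * J)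
    (hJI : span {x ^ M * v} * J ≤ span {u} * I) :
    ∃ C : Ideal R, span {x ^ N * u} * I = span {v} * J * C ∧ C ≠ 0 ∧
      C ∣ span {x ^ (N + M)} := by
  obtain ⟨C₁, hC₁⟩ := dvd_iff_le.mpr hIJ
  obtain ⟨C₂, hC₂⟩ := dvd_iff_le.mpr hJI
  have hspan : ∀ {y : R}, y ≠ 0 → span {y} ≠ 0 := mt span_singleton_eq_bot.mp
  have hprod : span {u} * I * (span {v} * J) ≠ 0 :=
    mul_ne_zero (mul_ne_zero (hspan hu) hI) (mul_ne_zero (hspan hv) hJ)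
  refine ⟨C₁, hC₁, ?_, C₂, mul_right_cancel₀ hprod ?_⟩
  · rintro rfl
    rw [mul_zero] at hC₁
    exact mul_ne_zero (hspan (mul_ne_zero (pow_ne_zero N hx) hu)) hI hC₁
  · calc span {x ^ (N + M)} * (span {u} * I * (span {v} * J))
        = span {x ^ N * u} * I * (span {x ^ M * v} * J) := by
          simp only [pow_add, ← span_singleton_mul_span_singleton]; ring
      _ = C₁ * C₂ * (span {u} * I * (span {v} * J)) := by
          rw [hC₁, hC₂]; ring

end Ideal

namespace ClassGroup

variable {R : Type*} [CommRing R] [IsDedekindDomain R]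

def subgroupOfPrimesContaining (x : R) : Subgroup (ClassGroup R) :=
  Subgroup.closure {c : ClassGroup R |
    ∃ Q : Ideal R, Q.IsPrime ∧ x ∈ Q ∧ ∃ hQ : Q ∈ (Ideal R)⁰, c = mk0 ⟨Q, hQ⟩}

theorem mk0_mem_subgroupOfPrimesContaining_of_dvd_span_pow {x : R} {m : ℕ} {C : Ideal R}
    (hdvd : C ∣ Ideal.span {x ^ m}) (hC : C ∈ (Ideal R)⁰) :
    mk0 ⟨C, hC⟩ ∈ subgroupOfPrimesContaining x := by
  induction C using UniqueFactorizationMonoid.induction_on_prime with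
  | h₁ => exact absurd hC zero_notMem_nonZeroDivisors
  | h₂ C hunit =>
    obtain rfl := Ideal.isUnit_iff.mp hunit
    rw [(mk0_eq_one_iff hC).mpr inferInstance]
    exact one_mem _
  | h₃ C P hCne hP ih =>
    have hP0 : P ∈ (Ideal R)⁰ := mem_nonZeroDivisors_of_ne_zero hP.ne_zero
    have hC0 : C ∈ (Ideal R)⁰ := mem_nonZeroDivisors_of_ne_zero hCne
    have hx : x ∈ P := (Ideal.isPrime_of_prime hP).mem_of_pow_mem m <|
      Ideal.le_of_dvd (dvd_of_mul_right_dvd hdvd) (Ideal.mem_span_singleton_self _)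
    rw [show (⟨P * C, hC⟩ : (Ideal R)⁰) = ⟨P, hP0⟩ * ⟨C, hC0⟩ from rfl, map_mul]
    exact mul_mem (Subgroup.subset_closure ⟨P, Ideal.isPrime_of_prime hP, hx, hP0, rfl⟩)
      (ih (dvd_of_mul_left_dvd hdvd) hC0)

theorem mk0_mul_inv_mem_subgroupOfPrimesContaining_of_le {x u v : R} (hx : x ≠ 0)
    (hu : u ≠ 0) (hv : v ≠ 0) {I J : Ideal R} (hI : I ∈ (Ideal R)⁰) (hJ : J ∈ (Ideal R)⁰)
    {N M : ℕ} (hIJ : Ideal.span {x ^ N * u} * I ≤ Ideal.span {v} * J)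
    (hJI : Ideal.span {x ^ M * v} * J ≤ Ideal.span {u} * I) :
    mk0 ⟨I, hI⟩ * (mk0 ⟨J, hJ⟩)⁻¹ ∈ subgroupOfPrimesContaining x := by
  obtain ⟨C, hC, hCne, hdvd⟩ := Ideal.exists_eq_mul_dvd_span_pow_of_le hx hu hv
    (nonZeroDivisors.coe_ne_zero ⟨I, hI⟩) (nonZeroDivisors.coe_ne_zero ⟨J, hJ⟩) hIJ hJI
  have hC0 : C ∈ (Ideal R)⁰ := mem_nonZeroDivisors_of_ne_zero hCne
  have hclass : mk0 ⟨I, hI⟩ = mk0 ⟨J, hJ⟩ * mk0 ⟨C, hC0⟩ := by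
    rw [← map_mul, mk0_eq_mk0_iff]
    exact ⟨_, _, mul_ne_zero (pow_ne_zero N hx) hu, hv, by rw [hC, mul_assoc]; rfl⟩
  rw [hclass, mul_inv_cancel_comm]
  exact mk0_mem_subgroupOfPrimesContaining_of_dvd_span_pow hdvd hC0

end ClassGroup

section LocSubring

variable {K : Type} [Field K] {lam : K} {hlam : lam ≠ 0}

instance : Algebra (orderGen lam) (locSubring lam hlam) :=
  (Subring.inclusion (orderGen_le_locSubring lam hlam)).toAlgebra

@[simp]
theorem coe_algebraMap_locSubring (a : orderGen lam) :
    (algebraMap (orderGen lam) (locSubring lam hlam) a : K) = a := rfl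

theorem isLocalization_locSubring :
    IsLocalization (Submonoid.powers (⟨lam, lam_mem_orderGen lam⟩ : orderGen lam))
      (locSubring lam hlam) := by
  refine (isLocalization_iff _ _).mpr ⟨?_, ?_, fun {x y} h => ⟨1, ?_⟩⟩
  · rintro ⟨_, k, rfl⟩
    rw [map_pow]
    refine IsUnit.pow k (IsUnit.of_mul_eq_one ⟨lam⁻¹, 1, one_mem _, 1, by simp⟩ ?_)
    exact Subtype.ext (mul_inv_cancel₀ hlam)
  · rintro ⟨_, a, ha, k, rfl⟩
    refine ⟨(⟨a, ha⟩, ⟨_, k, rfl⟩), Subtype.ext ?_⟩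
    simp [div_mul_cancel₀ _ (pow_ne_zero k hlam)]
  · have hxy : (x : K) = y := by simpa using congrArg Subtype.val h
    rw [Subtype.ext hxy]

theorem exists_mul_pow_mem_of_mem_map {B : Ideal (orderGen lam)} {z : locSubring lam hlam}
    (hz : z ∈ B.map (Subring.inclusion (orderGen_le_locSubring lam hlam))) :
    ∃ k : ℕ, ∃ b ∈ B, (z : K) * lam ^ k = b := by
  have := isLocalization_locSubring (hlam := hlam)
  obtain ⟨⟨⟨b, hb⟩, ⟨_, k, rfl⟩⟩, h⟩ := (IsLocalization.mem_map_algebraMap_iff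
    (Submonoid.powers (⟨lam, lam_mem_orderGen lam⟩ : orderGen lam)) _).mp hz
  exact ⟨k, b, hb, by simpa using congrArg Subtype.val h⟩

theorem exists_mul_pow_mem_of_image_eq {A B : Ideal (orderGen lam)} {ξ : K}
    (heq : (fun t => ξ * t) '' idealSet (locSubring lam hlam)
          (Ideal.map (Subring.inclusion (orderGen_le_locSubring lam hlam)) A) =
        idealSet (locSubring lam hlam)
          (Ideal.map (Subring.inclusion (orderGen_le_locSubring lam hlam)) B))
    {a : orderGen lam} (ha : a ∈ A) : ∃ k : ℕ, ∃ b ∈ B, ξ * a * lam ^ k = b := by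
  have hξa : ξ * a ∈ idealSet (locSubring lam hlam)
      (B.map (Subring.inclusion (orderGen_le_locSubring lam hlam))) :=
    heq ▸ ⟨a, ⟨_, Ideal.mem_map_of_mem _ ha, rfl⟩, rfl⟩
  obtain ⟨z, hz, hzξ⟩ := hξa
  rw [← hzξ]
  exact exists_mul_pow_mem_of_mem_map hz

theorem span_pow_mul_map_le_of_image_eq {R : Type*} [CommRing R] [IsNoetherianRing R]
    [Algebra R K] [FaithfulSMul R K] {f : orderGen lam →+* R}
    (hf : ∀ a : orderGen lam, algebraMap R K (f a) = a) {x : R} (hx : algebraMap R K x = lam)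
    {A B : Ideal (orderGen lam)} {ξ : K}
    (heq : (fun t => ξ * t) '' idealSet (locSubring lam hlam)
          (Ideal.map (Subring.inclusion (orderGen_le_locSubring lam hlam)) A) =
        idealSet (locSubring lam hlam)
          (Ideal.map (Subring.inclusion (orderGen_le_locSubring lam hlam)) B))
    {u v : R} (huv : algebraMap R K u = ξ * algebraMap R K v) :
    ∃ N : ℕ, Ideal.span {x ^ N * u} * A.map f ≤ Ideal.span {v} * B.map f := by
  obtain ⟨N, hN⟩ := Ideal.exists_pow_forall_mul_pow_mem x (Ideal.span {v} * B.map f)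
  refine ⟨N, Ideal.span_singleton_mul_le_iff.mpr fun z hz => ?_⟩
  suffices A.map f ≤ (Ideal.span {v} * B.map f).colon {u * x ^ N} by
    simpa [mul_comm, mul_left_comm] using Submodule.mem_colon_singleton.mp (this hz)
  refine Ideal.map_le_iff_le_comap.mpr fun a ha => ?_
  obtain ⟨k, b, hb, hab⟩ := exists_mul_pow_mem_of_image_eq heq ha
  have hR : f a * u * x ^ k = v * f b := FaithfulSMul.algebraMap_injective R K <| by
    simp only [map_mul, map_pow, hf, hx, huv, ← hab]; ring
  rw [Ideal.mem_comap, Submodule.mem_colon_singleton, smul_eq_mul, ← mul_assoc]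
  exact hN _ k <|
    hR ▸ Ideal.mul_mem_mul (Ideal.mem_span_singleton_self v) (Ideal.mem_map_of_mem f hb)

end LocSubring

theorem class_congruence_of_extended_ideals_equivalent_general {K : Type} [Field K] [NumberField K]
    (lam : K) (hlam : lam ≠ 0)
    (f : orderGen lam →+* NumberField.RingOfIntegers K)
    (hf : ∀ a : orderGen lam,
      algebraMap (NumberField.RingOfIntegers K) K (f a) = (a : K))
    (lamO : NumberField.RingOfIntegers K)
    (hlamO : algebraMap (NumberField.RingOfIntegers K) K lamO = lam)
    (A B : Ideal (orderGen lam))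
    (ξ : K) (hξ : ξ ≠ 0)
    (heq : (fun t => ξ * t) '' idealSet (locSubring lam hlam)
          (Ideal.map (Subring.inclusion (orderGen_le_locSubring lam hlam)) A) =
        idealSet (locSubring lam hlam)
          (Ideal.map (Subring.inclusion (orderGen_le_locSubring lam hlam)) B)) :
    ∀ (hA' : Ideal.map f A ∈ nonZeroDivisors (Ideal (NumberField.RingOfIntegers K)))
      (hB' : Ideal.map f B ∈ nonZeroDivisors (Ideal (NumberField.RingOfIntegers K))),
      ClassGroup.mk0 ⟨Ideal.map f A, hA'⟩ * (ClassGroup.mk0 ⟨Ideal.map f B, hB'⟩)⁻¹ ∈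
        Subgroup.closure {c : ClassGroup (NumberField.RingOfIntegers K) |
          ∃ Q : Ideal (NumberField.RingOfIntegers K), Q.IsPrime ∧ lamO ∈ Q ∧
            ∃ hQ : Q ∈ nonZeroDivisors (Ideal (NumberField.RingOfIntegers K)),
              c = ClassGroup.mk0 ⟨Q, hQ⟩} := by
  intro hA' hB'
  obtain ⟨u, v, hv, hξuv⟩ := IsFractionRing.div_surjective (A := NumberField.RingOfIntegers K) ξ
  have hvK : algebraMap _ K v ≠ 0 := IsFractionRing.to_map_ne_zero_of_mem_nonZeroDivisors hv
  have huv : algebraMap _ K u = ξ * algebraMap _ K v := by rw [← hξuv, div_mul_cancel₀ _ hvK]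
  have hvu : algebraMap _ K v = ξ⁻¹ * algebraMap _ K u := by rw [huv, inv_mul_cancel_left₀ hξ]
  have hu : u ≠ 0 := by
    rintro rfl
    exact mul_ne_zero hξ hvK (by simpa using huv.symm)
  have heq' : (fun t => ξ⁻¹ * t) '' idealSet (locSubring lam hlam)
      (B.map (Subring.inclusion (orderGen_le_locSubring lam hlam))) =
      idealSet (locSubring lam hlam)
        (A.map (Subring.inclusion (orderGen_le_locSubring lam hlam))) := by
    rw [← heq, Set.image_image]
    simp only [inv_mul_cancel_left₀ hξ, Set.image_id']
  obtain ⟨N, hN⟩ := span_pow_mul_map_le_of_image_eq hf hlamO heq huv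
  obtain ⟨M, hM⟩ := span_pow_mul_map_le_of_image_eq hf hlamO heq' hvu
  exact ClassGroup.mk0_mul_inv_mem_subgroupOfPrimesContaining_of_le
    (fun h => hlam (by rw [← hlamO, h, map_zero])) hu (nonZeroDivisors.ne_zero hv) hA' hB' hN hM

set_option synthInstance.maxHeartbeats 1000000 in
set_option maxHeartbeats 1000000 in
/-- Theorem 1 (iii): let `O = ℤ[λ]` be an order in the number field `K` with ring of
integers `O_K`, and let `A`, `B` be nonzero ideals of `O` whose extensions
`𝔄 = O_{(M)}·A` and `𝔅 = O_{(M)}·B` to the localization at powers of `λ` are equivalent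
via some `ξ ∈ K^×`.  Then in `Cl(O_K)` the classes of `O_K·A` and `O_K·B` agree modulo
the subgroup generated by the classes of the primes of `O_K` dividing `O_K·λ`. -/
theorem class_congruence_of_extended_ideals_equivalent {K : Type} [Field K] [NumberField K]
    (lam : K) (hlam : lam ≠ 0) (hint : IsIntegral ℤ lam)
    (hgen : Algebra.adjoin ℚ ({lam} : Set K) = ⊤)
    (f : orderGen lam →+* NumberField.RingOfIntegers K)
    (hf : ∀ a : orderGen lam,
      algebraMap (NumberField.RingOfIntegers K) K (f a) = (a : K))
    (lamO : NumberField.RingOfIntegers K)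
    (hlamO : algebraMap (NumberField.RingOfIntegers K) K lamO = lam)
    (A B : Ideal (orderGen lam)) (hA : A ≠ ⊥) (hB : B ≠ ⊥)
    (ξ : K) (hξ : ξ ≠ 0)
    (heq : (fun t => ξ * t) '' idealSet (locSubring lam hlam)
          (Ideal.map (Subring.inclusion (orderGen_le_locSubring lam hlam)) A) =
        idealSet (locSubring lam hlam)
          (Ideal.map (Subring.inclusion (orderGen_le_locSubring lam hlam)) B)) :
    ∀ (hA' : Ideal.map f A ∈ nonZeroDivisors (Ideal (NumberField.RingOfIntegers K)))
      (hB' : Ideal.map f B ∈ nonZeroDivisors (Ideal (NumberField.RingOfIntegers K))),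
      ClassGroup.mk0 ⟨Ideal.map f A, hA'⟩ * (ClassGroup.mk0 ⟨Ideal.map f B, hB'⟩)⁻¹ ∈
        Subgroup.closure {c : ClassGroup (NumberField.RingOfIntegers K) |
          ∃ Q : Ideal (NumberField.RingOfIntegers K), Q.IsPrime ∧ lamO ∈ Q ∧
            ∃ hQ : Q ∈ nonZeroDivisors (Ideal (NumberField.RingOfIntegers K)),
              c = ClassGroup.mk0 ⟨Q, hQ⟩} :=
  class_congruence_of_extended_ideals_equivalent_general lam hlam f hf lamO hlamO A B ξ hξ heq

end
end

section
/- Let λ' be the Perron eigenvalue of the irreducible nonnegative integer matrix B = [[13, 5], [3, 1]], so λ' = 7 + √51 and K = ℚ(√51). Let w be an eigenvector of B for λ' with coordinates in ℤ[λ'], and let I_B be the O_K-ideal generated by the coordinates of w. Then the class [I_B] in Cl(O_K) does NOT lie in the subgroup of Cl(O_K) generated by the classes of the prime ideals of O_K dividing λ'. Consequently, combined with the invariance of this class under strong shift equivalence, the matrices [[14,2],[1,0]] and [[13,5],[3,1]] are not strong shift equivalent. -/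
/-- An elementary strong shift equivalence step between square nonnegative integer
matrices: `A = R·S` and `B = S·R` for rectangular nonnegative integer matrices `R`, `S`. -/
def ElemSSE (X Y : Σ n : ℕ, Matrix (Fin n) (Fin n) ℕ) : Prop :=
  ∃ (R : Matrix (Fin X.1) (Fin Y.1) ℕ) (S : Matrix (Fin Y.1) (Fin X.1) ℕ),
    X.2 = R * S ∧ Y.2 = S * R

/-- Strong shift equivalence: a finite chain of elementary strong shift equivalences. -/
def SSE (X Y : Σ n : ℕ, Matrix (Fin n) (Fin n) ℕ) : Prop :=
  Relation.ReflTransGen ElemSSE X Y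

open NumberField Matrix

/-!
Put `λ = 7 + √51`. Its norm is `-2`, so `(λ)` is a maximal ideal, the only prime containing `λ`,
and the subgroup of the class group in question is trivial. Both claims then reduce to: `B` has
no `λ`-eigenvector whose coordinates generate the unit ideal (a unimodular eigenvector), since
an eigenvector with principal coordinate ideal `(α)` becomes unimodular after division by `α`.

Having a unimodular `λ`-eigenvector passes from `R * S` to `S * R` when `(λ)` is maximal: for such
a `v`, the coordinate ideal of the eigenvector `S v` contains `λ` because `R (S v) = λ v`, so it is
either the unit ideal or `(λ)`, and in the latter case `S v / λ` is unimodular. The companion matrix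
`[[14, 2], [1, 0]]` has the unimodular eigenvector `(λ, 1)`. A unimodular eigenvector `(a₀, a₁)`
of `B` would force `N(a₀) = ±5`; but every `x ∈ 𝓞 K` has `4 N(x) = u² - 51 v²` with `u, v ∈ ℤ`,
and `u² ≡ ±20` has no solution modulo `17`.
-/

section UnimodularEigenvector

variable {R ι κ : Type*} [CommRing R]

theorem Ideal.span_range_smul (α : R) (v : ι → R) :
    Ideal.span (Set.range (α • v)) = Ideal.span {α} * Ideal.span (Set.range v) := by
  rw [Ideal.span_mul_span', Set.singleton_mul, ← Set.range_comp]
  rfl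

variable [Fintype ι]

theorem Ideal.span_range_mulVec_le (M : Matrix κ ι R) (v : ι → R) :
    Ideal.span (Set.range (M *ᵥ v)) ≤ Ideal.span (Set.range v) := by
  rw [Ideal.span_le]
  rintro _ ⟨i, rfl⟩
  exact Ideal.sum_mem _ fun j _ => Ideal.mul_mem_left _ _ (Ideal.subset_span ⟨j, rfl⟩)

theorem exists_eq_smul_of_span_range_eq_span_singleton [IsDomain R] {v : ι → R} {α : R}
    (hα : α ≠ 0) (h : Ideal.span (Set.range v) = Ideal.span {α}) :
    ∃ a : ι → R, v = α • a ∧ Ideal.span (Set.range a) = ⊤ := by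
  choose a ha using fun i =>
    Ideal.mem_span_singleton.mp (h ▸ Ideal.subset_span ⟨i, rfl⟩ : v i ∈ Ideal.span {α})
  obtain ⟨c, hc⟩ := (Submodule.mem_span_range_iff_exists_fun R).mp
    (h ▸ Ideal.mem_span_singleton_self α)
  refine ⟨a, funext ha, (Ideal.eq_top_iff_one _).mpr ?_⟩
  refine (Submodule.mem_span_range_iff_exists_fun R).mpr ⟨c, mul_left_cancel₀ hα ?_⟩
  simpa only [Finset.mul_sum, smul_eq_mul, mul_left_comm α, ← ha, mul_one] using hc

def HasUnimodularEigenvector (lam : R) (A : Matrix ι ι R) : Prop :=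
  ∃ v : ι → R, Ideal.span (Set.range v) = ⊤ ∧ A *ᵥ v = lam • v

theorem HasUnimodularEigenvector.of_span_eq_span_singleton [IsDomain R] {A : Matrix ι ι R}
    {lam α : R} {v : ι → R} (hα : α ≠ 0) (hspan : Ideal.span (Set.range v) = Ideal.span {α})
    (hv : A *ᵥ v = lam • v) : HasUnimodularEigenvector lam A := by
  obtain ⟨a, rfl, ha⟩ := exists_eq_smul_of_span_range_eq_span_singleton hα hspan
  refine ⟨a, ha, smul_right_injective (ι → R) hα ?_⟩
  simpa only [Matrix.mulVec_smul, smul_comm lam α] using hv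

theorem HasUnimodularEigenvector.of_isPrincipal [IsDomain R] {A : Matrix ι ι R} {lam : R}
    {v : ι → R} (hv0 : v ≠ 0) (hv : A *ᵥ v = lam • v)
    (hP : (Ideal.span (Set.range v)).IsPrincipal) : HasUnimodularEigenvector lam A := by
  obtain ⟨α, hα⟩ := hP.principal
  refine .of_span_eq_span_singleton (fun h => hv0 ?_) hα hv
  rw [h, Ideal.submodule_span_eq, Ideal.span_singleton_eq_bot.mpr rfl, Ideal.span_eq_bot] at hα
  exact funext fun i => hα _ ⟨i, rfl⟩

variable [Fintype κ]

theorem HasUnimodularEigenvector.mul_comm [IsDomain R] {lam : R} (hlam : lam ≠ 0)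
    (hmax : (Ideal.span {lam}).IsMaximal) {P : Matrix ι κ R} {Q : Matrix κ ι R}
    (h : HasUnimodularEigenvector lam (P * Q)) : HasUnimodularEigenvector lam (Q * P) := by
  obtain ⟨v, hv1, hv⟩ := h
  have ht : (Q * P) *ᵥ (Q *ᵥ v) = lam • (Q *ᵥ v) := by
    rw [← Matrix.mulVec_mulVec, Matrix.mulVec_mulVec _ P, hv, Matrix.mulVec_smul]
  have hle : Ideal.span {lam} ≤ Ideal.span (Set.range (Q *ᵥ v)) := by
    calc Ideal.span {lam} = Ideal.span (Set.range (lam • v)) := by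
          rw [Ideal.span_range_smul, hv1, Ideal.mul_top]
      _ = Ideal.span (Set.range (P *ᵥ (Q *ᵥ v))) := by rw [Matrix.mulVec_mulVec, hv]
      _ ≤ _ := Ideal.span_range_mulVec_le P _
  rcases hmax.out.le_iff.mp hle with htop | hspan
  · exact ⟨_, htop, ht⟩
  · exact .of_span_eq_span_singleton hlam hspan ht

theorem hasUnimodularEigenvector_companion {a b lam : R} (h : lam ^ 2 = a * lam + b) :
    HasUnimodularEigenvector lam !![a, b; 1, 0] := by
  refine ⟨![lam, 1], Ideal.eq_top_of_isUnit_mem _ (Ideal.subset_span ⟨1, rfl⟩) isUnit_one, ?_⟩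
  ext i
  fin_cases i <;> simp [Matrix.mulVec, dotProduct, Fin.sum_univ_two]
  linear_combination -h

end UnimodularEigenvector

theorem Matrix.map_fin_two {α β : Type*} (f : α → β) (a b c d : α) :
    (!![a, b; c, d]).map f = !![f a, f b; f c, f d] := by
  ext i j
  fin_cases i <;> fin_cases j <;> rfl

theorem HasUnimodularEigenvector.of_elemSSE {R : Type*} [CommRing R] [IsDomain R] {lam : R}
    (hlam : lam ≠ 0) (hmax : (Ideal.span {lam}).IsMaximal)
    {X Y : Σ n : ℕ, Matrix (Fin n) (Fin n) ℕ} (hXY : ElemSSE X Y)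
    (h : HasUnimodularEigenvector lam (X.2.map (Nat.castRingHom R))) :
    HasUnimodularEigenvector lam (Y.2.map (Nat.castRingHom R)) := by
  obtain ⟨P, Q, hX, hY⟩ := hXY
  rw [hX, Matrix.map_mul] at h
  rw [hY, Matrix.map_mul]
  exact h.mul_comm hlam hmax

theorem HasUnimodularEigenvector.of_SSE {R : Type*} [CommRing R] [IsDomain R] {lam : R}
    (hlam : lam ≠ 0) (hmax : (Ideal.span {lam}).IsMaximal)
    {X Y : Σ n : ℕ, Matrix (Fin n) (Fin n) ℕ} (hXY : SSE X Y)
    (h : HasUnimodularEigenvector lam (X.2.map (Nat.castRingHom R))) :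
    HasUnimodularEigenvector lam (Y.2.map (Nat.castRingHom R)) := by
  induction hXY with
  | refl => exact h
  | tail _ hstep ih => exact ih.of_elemSSE hlam hmax hstep

theorem ClassGroup.closure_mk0_primes_containing_eq_bot {R : Type*} [CommRing R]
    [IsDedekindDomain R] {x : R} (hx : (Ideal.span {x}).IsMaximal) :
    Subgroup.closure {c : ClassGroup R | ∃ Q : Ideal R, Q.IsPrime ∧ x ∈ Q ∧
      ∃ hQ : Q ∈ nonZeroDivisors (Ideal R), c = ClassGroup.mk0 ⟨Q, hQ⟩} = ⊥ := by
  rw [Subgroup.closure_eq_bot_iff]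
  rintro _ ⟨Q, hQ, hxQ, hQ0, rfl⟩
  rw [Set.mem_singleton_iff, ClassGroup.mk0_eq_one_iff]
  exact ⟨x, (hx.eq_of_le hQ.ne_top ((Ideal.span_singleton_le_iff_mem _).mpr hxQ)).symm⟩

theorem Ideal.isMaximal_span_singleton_of_prime_natAbs_norm {S : Type*} [CommRing S]
    [IsDedekindDomain S] [Module.Free ℤ S] [Module.Finite ℤ S] {x : S}
    (hx : (Algebra.norm ℤ x).natAbs.Prime) : (Ideal.span {x}).IsMaximal := by
  refine (Ideal.isPrime_of_irreducible_absNorm ?_).isMaximal ?_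
  · rwa [Ideal.absNorm_span_singleton, Nat.irreducible_iff_nat_prime]
  · rw [Ne, Ideal.span_singleton_eq_bot]
    rintro rfl
    simp [Nat.not_prime_zero] at hx

section QuadraticBasis

variable {F K : Type*} [Field F] [Field K] [Algebra F K] {d : F} {s : K}

theorem linearIndependent_one_sqrt (hs : s ^ 2 = algebraMap F K d) (hd : ∀ q : F, q ^ 2 ≠ d) :
    LinearIndependent F ![1, s] := by
  refine linearIndependent_fin2.mpr ⟨fun h0 => hd 0 ?_, fun a ha => hd a⁻¹ ?_⟩
  all_goals apply (algebraMap F K).injective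
  · simp_all
  · simp only [Matrix.cons_val_one, Matrix.cons_val_zero, Algebra.smul_def] at ha
    rw [← hs, map_pow, map_inv₀, ← eq_inv_of_mul_eq_one_right ha]

theorem span_one_sqrt_eq_top (hs : s ^ 2 = algebraMap F K d)
    (hgen : Algebra.adjoin F {s} = ⊤) : Submodule.span F (Set.range ![1, s]) = ⊤ := by
  rw [Matrix.range_cons_cons_empty, eq_top_iff]
  rintro x -
  have hx : x ∈ Algebra.adjoin F {s} := hgen ▸ Algebra.mem_top
  induction hx using Algebra.adjoin_induction with
  | mem x hx => exact Submodule.subset_span (by simp_all)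
  | algebraMap r => exact Submodule.mem_span_pair.mpr ⟨r, 0, by simp [Algebra.smul_def]⟩
  | add x y _ _ hx hy => exact add_mem hx hy
  | mul x y _ _ hx hy =>
    obtain ⟨a, b, rfl⟩ := Submodule.mem_span_pair.mp hx
    obtain ⟨c, e, rfl⟩ := Submodule.mem_span_pair.mp hy
    refine Submodule.mem_span_pair.mpr ⟨a * c + b * e * d, a * e + b * c, ?_⟩
    simp only [Algebra.smul_def, map_add, map_mul]
    linear_combination -(algebraMap F K b * algebraMap F K e) * hs

theorem exists_eq_add_mul_sqrt (hs : s ^ 2 = algebraMap F K d)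
    (hgen : Algebra.adjoin F {s} = ⊤) (x : K) :
    ∃ p q : F, x = algebraMap F K p + algebraMap F K q * s := by
  have hx : x ∈ Submodule.span F {1, s} := by
    rw [← Matrix.range_cons_cons_empty 1 s ![], span_one_sqrt_eq_top hs hgen]
    exact Submodule.mem_top
  obtain ⟨p, q, hpq⟩ := Submodule.mem_span_pair.mp hx
  exact ⟨p, q, by rw [← hpq, Algebra.smul_def, Algebra.smul_def, mul_one]⟩

noncomputable def basisOneSqrt (hs : s ^ 2 = algebraMap F K d) (hd : ∀ q : F, q ^ 2 ≠ d)
    (hgen : Algebra.adjoin F {s} = ⊤) : Module.Basis (Fin 2) F K :=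
  .mk (linearIndependent_one_sqrt hs hd) (span_one_sqrt_eq_top hs hgen).ge

variable (hs : s ^ 2 = algebraMap F K d) (hd : ∀ q : F, q ^ 2 ≠ d)
  (hgen : Algebra.adjoin F {s} = ⊤)
include hs hd hgen

theorem leftMulMatrix_basisOneSqrt (p q : F) :
    Algebra.leftMulMatrix (basisOneSqrt hs hd hgen) (algebraMap F K p + algebraMap F K q * s) =
      !![p, d * q; q, p] := by
  set b := basisOneSqrt hs hd hgen
  have hb : ∀ j, (algebraMap F K p + algebraMap F K q * s) * b j =
      ∑ i, !![p, d * q; q, p] i j • b i := by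
    intro j
    fin_cases j <;> simp [Fin.sum_univ_two, b, basisOneSqrt, Algebra.smul_def]
    linear_combination (algebraMap F K q) * hs
  ext i j
  rw [Algebra.leftMulMatrix_eq_repr_mul, hb, b.repr_sum_self]

theorem norm_add_mul_sqrt (p q : F) :
    Algebra.norm F (algebraMap F K p + algebraMap F K q * s) = p ^ 2 - d * q ^ 2 := by
  rw [Algebra.norm_eq_matrix_det (basisOneSqrt hs hd hgen), leftMulMatrix_basisOneSqrt,
    Matrix.det_fin_two_of]
  ring

theorem trace_add_mul_sqrt (p q : F) :
    Algebra.trace F K (algebraMap F K p + algebraMap F K q * s) = 2 * p := by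
  rw [Algebra.trace_eq_matrix_trace (basisOneSqrt hs hd hgen), leftMulMatrix_basisOneSqrt,
    Matrix.trace_fin_two_of]
  ring

end QuadraticBasis

theorem Rat.exists_intCast_eq_of_sq_eq_intCast {q : ℚ} {m : ℤ} (h : q ^ 2 = m) :
    ∃ n : ℤ, (n : ℚ) = q := by
  obtain ⟨n, hn⟩ := IsIntegrallyClosed.isIntegral_iff.mp
    (IsIntegral.of_pow two_pos (h ▸ isIntegral_algebraMap : IsIntegral ℤ (q ^ 2)))
  exact ⟨n, by rwa [eq_intCast] at hn⟩

theorem Rat.sq_ne_intCast_of_squarefree {d : ℤ} (hd : Squarefree d) (hd1 : d ≠ 1) (q : ℚ) :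
    q ^ 2 ≠ d := by
  intro h
  obtain ⟨n, rfl⟩ := exists_intCast_eq_of_sq_eq_intCast h
  have hn : n ^ 2 = d := by exact_mod_cast h
  exact hd1 (hn ▸ Int.isUnit_sq (hd n ⟨1, by rw [← hn, sq, mul_one]⟩))

section QuadraticRingOfIntegers

variable {K : Type*} [Field K] [NumberField K] {d : ℤ} {s : K}

theorem norm_int_eq_of_algebraMap_eq (hs : s ^ 2 = d) (hd : Squarefree d) (hd1 : d ≠ 1)
    (hgen : Algebra.adjoin ℚ {s} = ⊤) {x : 𝓞 K} {p q : ℤ} (hx : algebraMap (𝓞 K) K x = p + q * s) :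
    Algebra.norm ℤ x = p ^ 2 - d * q ^ 2 := by
  have h := norm_add_mul_sqrt (d := (d : ℚ)) (by rwa [map_intCast])
    (Rat.sq_ne_intCast_of_squarefree hd hd1) hgen p q
  rw [map_intCast, map_intCast, ← hx, ← RingOfIntegers.coe_eq_algebraMap,
    ← Algebra.coe_norm_int] at h
  exact_mod_cast h

theorem exists_sq_sub_mul_sq_eq_four_mul_norm (hs : s ^ 2 = d) (hd : Squarefree d)
    (hd1 : d ≠ 1) (hgen : Algebra.adjoin ℚ {s} = ⊤) (x : 𝓞 K) :
    ∃ u v : ℤ, u ^ 2 - d * v ^ 2 = 4 * Algebra.norm ℤ x := by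
  have hs' : s ^ 2 = algebraMap ℚ K d := by rwa [map_intCast]
  have hd' := Rat.sq_ne_intCast_of_squarefree hd hd1
  obtain ⟨p, q, hx⟩ := exists_eq_add_mul_sqrt hs' hgen (x : K)
  set u := Algebra.trace ℤ (𝓞 K) x
  set N := Algebra.norm ℤ x
  have hu : (u : ℚ) = 2 * p := by
    rw [Algebra.coe_trace_int, hx, trace_add_mul_sqrt hs' hd' hgen]
  have hN : (N : ℚ) = p ^ 2 - d * q ^ 2 := by
    rw [Algebra.coe_norm_int, hx, norm_add_mul_sqrt hs' hd' hgen]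
  -- `2 d q` squares to the integer `d (u² - 4 N)`, so it is an integer, divisible by the
  -- squarefree `d`
  have hsq : (2 * d * q) ^ 2 = ((d * (u ^ 2 - 4 * N) : ℤ) : ℚ) := by
    push_cast
    rw [hu, hN]
    ring
  obtain ⟨t, ht⟩ := Rat.exists_intCast_eq_of_sq_eq_intCast hsq
  have ht2 : t ^ 2 = d * (u ^ 2 - 4 * N) := by exact_mod_cast ht ▸ hsq
  obtain ⟨v, rfl⟩ : d ∣ t := (hd.dvd_pow_iff_dvd two_ne_zero).mp ⟨_, ht2⟩
  exact ⟨u, v, mul_left_cancel₀ hd.ne_zero (by linear_combination -ht2)⟩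

end QuadraticRingOfIntegers

section SqrtFiftyOne

variable {K : Type*} [Field K] [NumberField K] {s : K}

theorem Int.squarefree_fiftyOne : Squarefree (51 : ℤ) := by
  rw [show (51 : ℤ) = ((3 * 17 : ℕ) : ℤ) from rfl, Int.squarefree_natCast, Nat.squarefree_mul_iff]
  exact ⟨by norm_num, Nat.prime_three.prime.squarefree,
    (by norm_num : Nat.Prime 17).prime.squarefree⟩

theorem norm_int_eq_of_sq_eq_fiftyOne (hs : s ^ 2 = 51) (hgen : Algebra.adjoin ℚ {s} = ⊤)
    {x : 𝓞 K} {p q : ℤ} (hx : algebraMap (𝓞 K) K x = p + q * s) :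
    Algebra.norm ℤ x = p ^ 2 - 51 * q ^ 2 :=
  norm_int_eq_of_algebraMap_eq (by exact_mod_cast hs) Int.squarefree_fiftyOne (by norm_num) hgen hx

theorem natAbs_norm_ne_five (hs : s ^ 2 = 51) (hgen : Algebra.adjoin ℚ {s} = ⊤) (x : 𝓞 K) :
    (Algebra.norm ℤ x).natAbs ≠ 5 := by
  obtain ⟨u, v, h⟩ := exists_sq_sub_mul_sq_eq_four_mul_norm (d := 51) (by exact_mod_cast hs)
    Int.squarefree_fiftyOne (by norm_num) hgen x
  have hmod : ∀ a b : ZMod 17, a ^ 2 - 51 * b ^ 2 ≠ 4 * 5 ∧ a ^ 2 - 51 * b ^ 2 ≠ 4 * -5 := by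
    decide
  intro h5
  have h17 := congrArg (Int.cast : ℤ → ZMod 17) h
  push_cast at h17
  rcases Int.natAbs_eq_iff.mp h5 with hN | hN <;> rw [hN] at h17 <;> push_cast at h17
  exacts [(hmod u v).1 h17, (hmod u v).2 h17]

theorem not_hasUnimodularEigenvector_of_sq_eq_fiftyOne (hs : s ^ 2 = 51)
    (hgen : Algebra.adjoin ℚ {s} = ⊤) {lam : 𝓞 K} (hlam : algebraMap (𝓞 K) K lam = 7 + s) :
    ¬ HasUnimodularEigenvector lam !![(13 : 𝓞 K), 5; 3, 1] := by
  rintro ⟨a, ha1, ha⟩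
  have h0 : 13 * a 0 + 5 * a 1 = lam * a 0 := by
    simpa [Matrix.mulVec, dotProduct, Fin.sum_univ_two] using congrFun ha 0
  have h1 : 3 * a 0 + a 1 = lam * a 1 := by
    simpa [Matrix.mulVec, dotProduct, Fin.sum_univ_two] using congrFun ha 1
  obtain ⟨c, hc⟩ := (Submodule.mem_span_range_iff_exists_fun (𝓞 K)).mp
    ((Ideal.eq_top_iff_one _).mp ha1)
  simp only [Fin.sum_univ_two, smul_eq_mul] at hc
  have hN := fun {x : 𝓞 K} {p q : ℤ} (hx : algebraMap (𝓞 K) K x = p + q * s) =>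
    norm_int_eq_of_sq_eq_fiftyOne hs hgen hx
  have hN5 : Algebra.norm ℤ (5 : 𝓞 K) = 25 := by
    rw [hN (p := 5) (q := 0) (by rw [map_ofNat]; push_cast; ring)]; norm_num
  have hN13 : Algebra.norm ℤ (lam - 13) = -15 := by
    rw [hN (p := -6) (q := 1) (by rw [map_sub, map_ofNat, hlam]; push_cast; ring)]; norm_num
  have hN1 : Algebra.norm ℤ (lam - 1) = -15 := by
    rw [hN (p := 6) (q := 1) (by rw [map_sub, map_one, hlam]; push_cast; ring)]; norm_num
  -- `a 0` divides `5` and `λ - 1`, so its norm divides `5`; and `5 a₁ = (λ - 13) a₀` makes it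
  -- a multiple of `5`
  have hdvd5 : Algebra.norm ℤ (a 0) ∣ 25 := by
    rw [← hN5]
    exact map_dvd _ ⟨5 * c 0 + (lam - 13) * c 1, by linear_combination -5 * hc + c 1 * h0⟩
  have hdvd15 : Algebra.norm ℤ (a 0) ∣ -15 := by
    rw [← hN1]
    exact map_dvd _ ⟨(lam - 1) * c 0 + 3 * c 1, by linear_combination -(lam - 1) * hc - c 1 * h1⟩
  have hmul : 25 * Algebra.norm ℤ (a 1) = -15 * Algebra.norm ℤ (a 0) := by
    rw [← hN5, ← hN13, ← map_mul, ← map_mul]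
    congr 1
    linear_combination h0
  refine natAbs_norm_ne_five hs hgen (a 0) (Int.natAbs_eq_of_dvd_dvd (n := 5) ?_ ?_)
  · simpa using dvd_add hdvd5 (dvd_mul_of_dvd_right hdvd15 2)
  · omega

end SqrtFiftyOne

theorem class_of_coord_ideal_B_not_mem_and_not_SSE_general {K : Type} [Field K] [NumberField K]
    (s : K) (hs : s ^ 2 = 51)
    (hgen : Algebra.adjoin ℚ ({s} : Set K) = ⊤)
    (lamO : NumberField.RingOfIntegers K)
    (hlamO : algebraMap (NumberField.RingOfIntegers K) K lamO = 7 + s)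
    (w : Fin 2 → NumberField.RingOfIntegers K) (hw0 : w ≠ 0)
    (heig : Matrix.mulVec !![(13 : NumberField.RingOfIntegers K), 5; 3, 1] w = lamO • w) :
    (∀ hI : Ideal.span (Set.range w) ∈
        nonZeroDivisors (Ideal (NumberField.RingOfIntegers K)),
      ClassGroup.mk0 ⟨Ideal.span (Set.range w), hI⟩ ∉
        Subgroup.closure {c : ClassGroup (NumberField.RingOfIntegers K) |
          ∃ Q : Ideal (NumberField.RingOfIntegers K), Q.IsPrime ∧ lamO ∈ Q ∧
            ∃ hQ : Q ∈ nonZeroDivisors (Ideal (NumberField.RingOfIntegers K)),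
              c = ClassGroup.mk0 ⟨Q, hQ⟩}) ∧
    ¬ SSE ⟨2, !![14, 2; 1, 0]⟩ ⟨2, !![13, 5; 3, 1]⟩ := by
  have hnorm : Algebra.norm ℤ lamO = -2 := by
    rw [norm_int_eq_of_sq_eq_fiftyOne hs hgen (p := 7) (q := 1) (by rw [hlamO]; push_cast; ring)]
    norm_num
  have hmax : (Ideal.span {lamO}).IsMaximal :=
    Ideal.isMaximal_span_singleton_of_prime_natAbs_norm (by rw [hnorm]; norm_num)
  have hB := not_hasUnimodularEigenvector_of_sq_eq_fiftyOne hs hgen hlamO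
  refine ⟨fun hI hmem => ?_, fun hsse => hB ?_⟩
  · rw [ClassGroup.closure_mk0_primes_containing_eq_bot hmax, Subgroup.mem_bot,
      ClassGroup.mk0_eq_one_iff] at hmem
    exact hB (.of_isPrincipal hw0 heig hmem)
  · have hlam0 : lamO ≠ 0 := by
      rintro rfl
      simp at hnorm
    have hA : HasUnimodularEigenvector lamO !![(14 : 𝓞 K), 2; 1, 0] := by
      refine hasUnimodularEigenvector_companion (FaithfulSMul.algebraMap_injective (𝓞 K) K ?_)
      rw [map_pow, map_add, map_mul, hlamO, map_ofNat, map_ofNat]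
      linear_combination hs
    simpa [Matrix.map_fin_two] using
      HasUnimodularEigenvector.of_SSE hlam0 hmax hsse (by simpa [Matrix.map_fin_two] using hA)

set_option synthInstance.maxHeartbeats 1000000 in
set_option maxHeartbeats 1000000 in
/-- Let `λ' = 7 + √51` be the Perron eigenvalue of `B = [[13, 5], [3, 1]]`, `K = ℚ(√51)`.
If `w` is an eigenvector of `B` for `λ'` with coordinates in `ℤ[λ'] ⊆ O_K` and `I_B` is
the `O_K`-ideal generated by the coordinates of `w`, then the class `[I_B]` does NOT lie
in the subgroup of `Cl(O_K)` generated by the classes of the prime ideals of `O_K`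
dividing `λ'`; consequently (by invariance of this class under strong shift equivalence)
the matrices `[[14,2],[1,0]]` and `[[13,5],[3,1]]` are not strong shift equivalent. -/
theorem class_of_coord_ideal_B_not_mem_and_not_SSE {K : Type} [Field K] [NumberField K]
    (s : K) (hs : s ^ 2 = 51)
    (hgen : Algebra.adjoin ℚ ({s} : Set K) = ⊤)
    (lamO : NumberField.RingOfIntegers K)
    (hlamO : algebraMap (NumberField.RingOfIntegers K) K lamO = 7 + s)
    (w : Fin 2 → NumberField.RingOfIntegers K) (hw0 : w ≠ 0)
    (hw : ∀ i, algebraMap (NumberField.RingOfIntegers K) K (w i) ∈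
      Subring.closure ({7 + s} : Set K))
    (heig : Matrix.mulVec !![(13 : NumberField.RingOfIntegers K), 5; 3, 1] w = lamO • w) :
    (∀ hI : Ideal.span (Set.range w) ∈
        nonZeroDivisors (Ideal (NumberField.RingOfIntegers K)),
      ClassGroup.mk0 ⟨Ideal.span (Set.range w), hI⟩ ∉
        Subgroup.closure {c : ClassGroup (NumberField.RingOfIntegers K) |
          ∃ Q : Ideal (NumberField.RingOfIntegers K), Q.IsPrime ∧ lamO ∈ Q ∧
            ∃ hQ : Q ∈ nonZeroDivisors (Ideal (NumberField.RingOfIntegers K)),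
              c = ClassGroup.mk0 ⟨Q, hQ⟩}) ∧
    ¬ SSE ⟨2, !![14, 2; 1, 0]⟩ ⟨2, !![13, 5; 3, 1]⟩ :=
  class_of_coord_ideal_B_not_mem_and_not_SSE_general s hs hgen lamO hlamO w hw0 heig
end
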